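/- arXiv:1605.04983 — 3 statements merged into one kernel-verified Lean document; each statement's English description precedes it below -/
import Mathlib

section
/- Let d, k be positive reals and M, L, fmax positive reals. The function φ(ε') = (1−ε')·(min{1, ε'·fmax/(M·L)})^(d/k) on (0,1] attains its maximum at ε' = min{d/(d+k), M·L/fmax}. -/
/-!
Put `a = d / k` and `c = M * L / fmax`, so that `φ x = (1 - x) * min 1 (x / c) ^ a`.
Weighted AM–GM applied to `x / t` and `(1 - x) / (1 - t)` shows that `g x = (1 - x) * x ^ a`
increases on `[0, a / (a + 1)]` and is maximal at `a / (a + 1)`. If `a / (a + 1) ≤ c`, then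
`φ ≤ g / c ^ a` with equality at `a / (a + 1)`. Otherwise `φ c = 1 - c`, which dominates
`φ x ≤ 1 - x` for `x ≥ c` and `φ x = g x / c ^ a ≤ g c / c ^ a` for `x < c`.
-/

open Real

theorem rpow_mul_le_one_of_mul_add_le {a u v : ℝ} (ha : 0 < a) (hu : 0 ≤ u) (hv : 0 ≤ v)
    (h : a * u + v ≤ a + 1) : u ^ a * v ≤ 1 := by
  have ha1 : a + 1 ≠ 0 := by positivity
  have hgm : u ^ (a / (a + 1)) * v ^ (1 / (a + 1)) ≤ 1 := by
    refine (geom_mean_le_arith_mean2_weighted (by positivity) (by positivity) hu hv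
      (by field_simp)).trans ?_
    rw [div_mul_eq_mul_div, div_mul_eq_mul_div, ← add_div, div_le_one (by positivity)]
    linarith
  calc u ^ a * v = (u ^ (a / (a + 1)) * v ^ (1 / (a + 1))) ^ (a + 1) := by
        rw [mul_rpow (by positivity) (by positivity), ← rpow_mul hu, ← rpow_mul hv,
          div_mul_cancel₀ _ ha1, div_mul_cancel₀ _ ha1, rpow_one]
    _ ≤ 1 := rpow_le_one (by positivity) hgm (by positivity)

/-- The condition says that `x` lies on the same side of `t` as the maximiser
`a / (a + 1)` of `x ↦ (1 - x) * x ^ a`, or that `t` is that maximiser. -/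
theorem one_sub_mul_rpow_le {a t x : ℝ} (ha : 0 < a) (ht : 0 < t) (ht1 : t < 1)
    (hx : 0 ≤ x) (hx1 : x ≤ 1) (h : (x - t) * (a * (1 - t) - t) ≤ 0) :
    (1 - x) * x ^ a ≤ (1 - t) * t ^ a := by
  have h1t : 0 < 1 - t := by linarith
  have key := rpow_mul_le_one_of_mul_add_le ha (div_nonneg hx ht.le)
    (div_nonneg (sub_nonneg.2 hx1) h1t.le) (by
      rw [mul_div_assoc', div_add_div _ _ ht.ne' h1t.ne', div_le_iff₀ (by positivity)]
      nlinarith)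
  rw [div_rpow hx ht.le, div_mul_div_comm, div_le_one (by positivity)] at key
  linarith

theorem isMaxOn_one_sub_mul_min_one_div_rpow {a c : ℝ} (ha : 0 < a) (hc : 0 < c) :
    IsMaxOn (fun x : ℝ => (1 - x) * min 1 (x / c) ^ a) (Set.Icc 0 1)
      (min (a / (a + 1)) c) := by
  refine isMaxOn_iff.2 fun x ⟨hx0, hx1⟩ => ?_
  have hs : a / (a + 1) < 1 := (div_lt_one (by positivity)).2 (by linarith)
  have hscale : ∀ y, 0 ≤ y → (1 - y) * (y / c) ^ a = (1 - y) * y ^ a / c ^ a := fun y hy => by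
    rw [div_rpow hy hc.le, mul_div_assoc]
  have hclamp : (1 - x) * min 1 (x / c) ^ a ≤ (1 - x) * (x / c) ^ a :=
    mul_le_mul_of_nonneg_left (rpow_le_rpow (by positivity) (min_le_right _ _) ha.le)
      (by linarith)
  rcases le_or_gt (a / (a + 1)) c with hsc | hcs
  · rw [min_eq_left hsc, min_eq_right ((div_le_one hc).2 hsc), hscale _ (by positivity)]
    refine hclamp.trans ?_
    rw [hscale x hx0]
    refine div_le_div_of_nonneg_right ?_ (by positivity)
    refine one_sub_mul_rpow_le ha (by positivity) hs hx0 hx1 (le_of_eq ?_)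
    field_simp
    ring
  · rw [min_eq_right hcs.le, div_self hc.ne', min_self, one_rpow, mul_one]
    rcases le_or_gt c x with hcx | hxc
    · calc (1 - x) * min 1 (x / c) ^ a ≤ (1 - x) * 1 :=
            mul_le_mul_of_nonneg_left (rpow_le_one (by positivity) (min_le_left _ _) ha.le)
              (by linarith)
        _ ≤ 1 - c := by linarith
    · refine hclamp.trans ?_
      rw [hscale x hx0, div_le_iff₀ (by positivity)]
      refine one_sub_mul_rpow_le ha hc (hcs.trans hs) hx0 hx1 (mul_nonpos_of_nonpos_of_nonneg
        (by linarith) ?_)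
      rw [lt_div_iff₀ (by positivity)] at hcs
      linarith

theorem stmt_3 (d k M L fmax : ℝ) (hd : 0 < d) (hk : 0 < k)
    (hM : 0 < M) (hL : 0 < L) (hf : 0 < fmax) :
    min (d / (d + k)) (M * L / fmax) ∈ Set.Ioc (0 : ℝ) 1 ∧
    IsMaxOn (fun ε' : ℝ => (1 - ε') * (min 1 (ε' * fmax / (M * L))) ^ (d / k))
      (Set.Ioc (0 : ℝ) 1) (min (d / (d + k)) (M * L / fmax)) := by
  have ha : 0 < d / k := div_pos hd hk
  have hc : 0 < M * L / fmax := by positivity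
  have hdk : d / (d + k) = d / k / (d / k + 1) := by field_simp
  have hscale (x : ℝ) : x * fmax / (M * L) = x / (M * L / fmax) := by field_simp
  simp only [hdk, hscale]
  have hs : d / k / (d / k + 1) < 1 := (div_lt_one (by positivity)).2 (by linarith)
  exact ⟨⟨lt_min (by positivity) hc, (min_le_left _ _).trans hs.le⟩,
    (isMaxOn_one_sub_mul_min_one_div_rpow ha hc).on_subset Set.Ioc_subset_Icc_self⟩
end

section
/- The polynomial f(x) = x² admits no Handelman decomposition on [−1,1] with respect to g₁(x) = 1−x and g₂(x) = x+1: there do not exist finitely many nonnegative reals c_α indexed by α ∈ ℤ²_{≥0} such that x² = ∑_α c_α (1−x)^{α₁}(x+1)^{α₂} for all x ∈ ℝ. -/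
/-! At the interior point `x = 0` both `1 - x` and `x + 1` equal `1`, so a Handelman
representation of `x²` would be a sum of nonnegative coefficients adding up to `0`: every
coefficient vanishes and the right-hand side is identically zero, which fails at `x = 1`. -/

open Finset

theorem coeff_eq_zero_of_sum_mul_pow_mul_pow_eq_zero {S : Finset (ℕ × ℕ)} {c : ℕ × ℕ → ℝ}
    {u v : ℝ} (hu : 0 < u) (hv : 0 < v) (hc : ∀ α ∈ S, 0 ≤ c α)
    (h : ∑ α ∈ S, c α * u ^ α.1 * v ^ α.2 = 0) : ∀ α ∈ S, c α = 0 := by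
  intro α hα
  have hterm := (sum_eq_zero_iff_of_nonneg fun β hβ => by
    have := hc β hβ; positivity).mp h α hα
  simpa [hu.ne', hv.ne'] using hterm

theorem stmt_11 :
    ¬ ∃ (S : Finset (ℕ × ℕ)) (c : ℕ × ℕ → ℝ),
      (∀ α ∈ S, 0 ≤ c α) ∧
      ∀ x : ℝ, x ^ 2 = ∑ α ∈ S, c α * (1 - x) ^ α.1 * (x + 1) ^ α.2 := by
  rintro ⟨S, c, hc, h⟩
  have hc_zero : ∀ α ∈ S, c α = 0 :=
    coeff_eq_zero_of_sum_mul_pow_mul_pow_eq_zero one_pos one_pos hc (by simpa using (h 0).symm)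
  have h_one := h 1
  rw [sum_eq_zero fun α hα => by rw [hc_zero α hα, zero_mul, zero_mul]] at h_one
  norm_num at h_one
end

section
/- For every monomial x^m = x₁^{m₁}⋯x_d^{m_d} with |m| = m₁+⋯+m_d, the identity x^m = (1/|m|!) · ∑_{0≤p_i≤m_i} (−1)^{|m|−(p₁+⋯+p_d)} · C(m₁,p₁)⋯C(m_d,p_d) · (p₁x₁+⋯+p_d x_d)^{|m|} holds as an identity of polynomials in x₁,…,x_d. -/
/-!
Expand `(∑ i, p i * x i) ^ |m|` by the multinomial theorem and sum over `p` first: the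
coefficient of `x ^ k` factors as `∏ i, Δ^(m i) [j ↦ j ^ k i] (0)`. An `n`-th forward difference
kills `j ^ k` for `k < n` and sends `j ^ n` to `n!`. Since `|k| = |m|`, every `k ≠ m` has some
`k i < m i`, so only `k = m` survives, with coefficient `multinomial m * ∏ i, (m i)! = |m|!`.
-/

open Finset Nat

section AlternatingSum

variable {R : Type*} [CommRing R]

theorem sum_Iic_alternating_choose_mul_pow_eq_fwdDiff_iter (n k : ℕ) :
    ∑ j ∈ Iic n, (-1 : R) ^ (n - j) * n.choose j * (j : R) ^ k =
      (fwdDiff (1 : R))^[n] (fun r ↦ r ^ k) 0 := by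
  rw [← range_succ_eq_Iic, fwdDiff_iter_eq_sum_shift]
  refine sum_congr rfl fun j _ ↦ ?_
  simp [zsmul_eq_mul]

theorem sum_Iic_alternating_choose_mul_pow_of_lt {n k : ℕ} (h : k < n) :
    ∑ j ∈ Iic n, (-1 : R) ^ (n - j) * n.choose j * (j : R) ^ k = 0 := by
  rw [sum_Iic_alternating_choose_mul_pow_eq_fwdDiff_iter, fwdDiff_iter_pow_eq_zero_of_lt h,
    Pi.zero_apply]

theorem sum_Iic_alternating_choose_mul_pow_self (n : ℕ) :
    ∑ j ∈ Iic n, (-1 : R) ^ (n - j) * n.choose j * (j : R) ^ n = n ! := by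
  rw [sum_Iic_alternating_choose_mul_pow_eq_fwdDiff_iter, fwdDiff_iter_eq_factorial,
    Pi.natCast_apply]

end AlternatingSum

section Multiindex

variable {ι : Type*} [Fintype ι]

theorem exists_lt_of_sum_eq_of_ne {k m : ι → ℕ} (hsum : ∑ i, k i = ∑ i, m i)
    (hne : k ≠ m) : ∃ i, k i < m i := by
  by_contra! hle
  exact hne <| funext fun i ↦
    ((sum_eq_sum_iff_of_le fun i _ ↦ hle i).mp hsum.symm i (mem_univ i)).symm

variable [DecidableEq ι]

theorem sum_Iic_prod_eq_prod_sum_Iic {M : Type*} [CommSemiring M] (m : ι → ℕ)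
    (f : ι → ℕ → M) :
    ∑ p ∈ Iic m, ∏ i, f i (p i) = ∏ i, ∑ j ∈ Iic (m i), f i j :=
  (prod_univ_sum _ _).symm

end Multiindex

section Monomial

variable {ι R : Type*} [Fintype ι] [CommRing R]

theorem neg_one_pow_sum_sub_sum {p m : ι → ℕ} (h : p ≤ m) :
    (-1 : R) ^ (∑ i, m i - ∑ i, p i) = ∏ i, (-1 : R) ^ (m i - p i) := by
  rw [prod_pow_eq_pow_sum, sum_tsub_distrib _ fun i _ ↦ h i]

variable [DecidableEq ι]

theorem alternating_mul_sum_mul_pow_eq_sum_piAntidiag {p m : ι → ℕ} (h : p ≤ m) (x : ι → R)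
    (n : ℕ) :
    (-1 : R) ^ (∑ i, m i - ∑ i, p i) * (∏ i, ((m i).choose (p i) : R)) *
        (∑ i, (p i : R) * x i) ^ n =
      ∑ k ∈ piAntidiag univ n, multinomial univ k * (∏ i, x i ^ k i) *
        ∏ i, (-1 : R) ^ (m i - p i) * (m i).choose (p i) * (p i : R) ^ k i := by
  rw [neg_one_pow_sum_sub_sum h, sum_pow_eq_sum_piAntidiag, Finset.mul_sum]
  refine sum_congr rfl fun k _ ↦ ?_
  simp only [mul_pow, prod_mul_distrib]
  ring

theorem sum_Iic_alternating_mul_sum_mul_pow (m : ι → ℕ) (x : ι → R) :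
    ∑ p ∈ Iic m, (-1 : R) ^ (∑ i, m i - ∑ i, p i) * (∏ i, ((m i).choose (p i) : R)) *
        (∑ i, (p i : R) * x i) ^ (∑ i, m i) =
      (∑ i, m i)! * ∏ i, x i ^ m i := by
  have hm : m ∈ piAntidiag univ (∑ i, m i) := mem_piAntidiag.mpr ⟨rfl, fun i _ ↦ mem_univ i⟩
  calc _ = ∑ k ∈ piAntidiag univ (∑ i, m i), multinomial univ k * (∏ i, x i ^ k i) *
          ∏ i, ∑ j ∈ Iic (m i), (-1 : R) ^ (m i - j) * (m i).choose j * (j : R) ^ k i := by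
        rw [sum_congr rfl fun p hp ↦
          alternating_mul_sum_mul_pow_eq_sum_piAntidiag (mem_Iic.mp hp) x _, sum_comm]
        refine sum_congr rfl fun k _ ↦ ?_
        rw [← Finset.mul_sum, ← sum_Iic_prod_eq_prod_sum_Iic]
    _ = multinomial univ m * (∏ i, x i ^ m i) * ∏ i, ((m i)! : R) := by
        rw [sum_eq_single_of_mem m hm fun k hk hne ↦ ?_]
        · simp_rw [sum_Iic_alternating_choose_mul_pow_self]
        obtain ⟨i, hi⟩ := exists_lt_of_sum_eq_of_ne (mem_piAntidiag.mp hk).1 hne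
        exact mul_eq_zero_of_right _ <|
          prod_eq_zero (mem_univ i) (sum_Iic_alternating_choose_mul_pow_of_lt hi)
    _ = (∑ i, m i)! * ∏ i, x i ^ m i := by
        rw [← multinomial_spec univ m]
        push_cast
        ring

end Monomial

theorem stmt_12 (d : ℕ) (m : Fin d → ℕ) (x : Fin d → ℝ) :
    ∏ i, x i ^ m i =
      (1 / (Nat.factorial (∑ i, m i) : ℝ)) *
        ∑ p ∈ Finset.Iic m,
          (-1 : ℝ) ^ ((∑ i, m i) - (∑ i, p i)) *
            (∏ i, (Nat.choose (m i) (p i) : ℝ)) *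
            (∑ i, (p i : ℝ) * x i) ^ (∑ i, m i) := by
  rw [sum_Iic_alternating_mul_sum_mul_pow, one_div,
    inv_mul_cancel_left₀ (cast_ne_zero.mpr (factorial_ne_zero _))]
end
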